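/- arXiv:2303.10491 — 3 statements merged into one kernel-verified Lean document; each statement's English description precedes it below -/
import Mathlib

section
/- The integral ∫_{-π}^{π} √((2 − cos q)² − 1) dq equals 2π + 4. -/
/-!
Since `cos q = 1 - 2 sin² (q / 2)`, the radicand factors as
`(2 - cos q)² - 1 = 4 sin² (q / 2) (2 - cos² (q / 2))`. The integrand is `2π`-periodic, so we may
integrate over `[0, 2π]`, where `sin (q / 2) ≥ 0`; there the substitution `u = -cos (q / 2)` turns
the integral into `4 ∫_{-1}^{1} √(2 - u²) du`. The last integral is the area of the part of the
disc of radius `√2` between the chords `u = ±1`, namely `π / 2 + 1`.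
-/

open Real intervalIntegral

theorem integral_sqrt_sq_sub_sq {r a b : ℝ} (hr : 0 ≤ r) (ha : a ∈ Set.Icc (-(π / 2)) (π / 2))
    (hb : b ∈ Set.Icc (-(π / 2)) (π / 2)) :
    ∫ u in r * sin a..r * sin b, √(r ^ 2 - u ^ 2) =
      r ^ 2 * (cos b * sin b - cos a * sin a + b - a) / 2 := by
  have hcos : ∀ x ∈ Set.uIcc a b, √(r ^ 2 - (r * sin x) ^ 2) = r * cos x := fun x hx ↦ by
    obtain ⟨hx₁, hx₂⟩ := Set.uIcc_subset_Icc ha hb hx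
    rw [show r ^ 2 - (r * sin x) ^ 2 = (r * cos x) ^ 2 by
      linear_combination (-r ^ 2) * sin_sq_add_cos_sq x,
      sqrt_sq (mul_nonneg hr (cos_nonneg_of_neg_pi_div_two_le_of_le hx₁ hx₂))]
  calc ∫ u in r * sin a..r * sin b, √(r ^ 2 - u ^ 2)
      = ∫ x in a..b, √(r ^ 2 - (r * sin x) ^ 2) * (r * cos x) :=
        (integral_comp_mul_deriv (fun x _ ↦ (hasDerivAt_sin x).const_mul r)
          (by fun_prop) (by fun_prop)).symm
    _ = ∫ x in a..b, r ^ 2 * cos x ^ 2 :=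
        integral_congr fun x hx ↦ by simp only [hcos x hx]; ring
    _ = r ^ 2 * (cos b * sin b - cos a * sin a + b - a) / 2 := by
        rw [integral_const_mul, integral_cos_sq, mul_div_assoc]

theorem integral_sqrt_two_sub_sq : ∫ u in (-1 : ℝ)..1, √(2 - u ^ 2) = π / 2 + 1 := by
  have hsin : √2 * sin (π / 4) = 1 := by
    rw [sin_pi_div_four, ← mul_div_assoc, mul_self_sqrt zero_le_two, div_self two_ne_zero]
  have h := integral_sqrt_sq_sub_sq (sqrt_nonneg 2) (a := -(π / 4)) (b := π / 4)
    ⟨by linarith [pi_pos], by linarith [pi_pos]⟩ ⟨by linarith [pi_pos], by linarith [pi_pos]⟩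
  rw [sin_neg, cos_neg, mul_neg, hsin, sq_sqrt zero_le_two] at h
  rw [h, sin_pi_div_four, cos_pi_div_four]
  linear_combination (1 / 2 : ℝ) * sq_sqrt (zero_le_two : (0 : ℝ) ≤ 2)

theorem sqrt_sq_two_sub_cos_sub_one {q : ℝ} (hq : 0 ≤ sin (q / 2)) :
    √((2 - cos q) ^ 2 - 1) = 2 * sin (q / 2) * √(2 - cos (q / 2) ^ 2) := by
  have h : (2 - cos q) ^ 2 - 1 = (2 * sin (q / 2)) ^ 2 * (2 - cos (q / 2) ^ 2) := by
    nth_rewrite 1 [show q = 2 * (q / 2) by ring]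
    rw [cos_two_mul]
    linear_combination 4 * (cos (q / 2) ^ 2 - 2) * sin_sq_add_cos_sq (q / 2)
  rw [h, sqrt_mul' _ (by nlinarith [cos_sq_le_one (q / 2)]), sqrt_sq (by positivity)]

theorem integral_sqrt_dispersion :
    ∫ q in (-π)..π, Real.sqrt ((2 - Real.cos q) ^ 2 - 1) = 2 * π + 4 := by
  have hperiodic : Function.Periodic (fun q ↦ √((2 - cos q) ^ 2 - 1)) (2 * π) :=
    cos_periodic.comp fun c ↦ √((2 - c) ^ 2 - 1)
  have hsubst : ∀ q ∈ Set.uIcc 0 (2 * π), √((2 - cos q) ^ 2 - 1) =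
      4 * (((fun u ↦ √(2 - u ^ 2)) ∘ fun q ↦ -cos (q / 2)) q * (sin (q / 2) / 2)) := by
    intro q hq
    rw [Set.uIcc_of_le (by positivity)] at hq
    rw [sqrt_sq_two_sub_cos_sub_one (sin_nonneg_of_nonneg_of_le_pi (by linarith [hq.1])
      (by linarith [hq.2])), Function.comp_apply, neg_sq]
    ring
  have hderiv (q : ℝ) : HasDerivAt (fun q ↦ -cos (q / 2)) (sin (q / 2) / 2) q :=
    ((hasDerivAt_id' q).div_const 2).cos.fun_neg.congr_deriv (by ring)
  calc ∫ q in (-π)..π, √((2 - cos q) ^ 2 - 1)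
      = ∫ q in 0..2 * π, √((2 - cos q) ^ 2 - 1) := by
        simpa [show -π + 2 * π = π by ring] using hperiodic.intervalIntegral_add_eq (-π) 0
    _ = 4 * ∫ u in (-1)..1, √(2 - u ^ 2) := by
        rw [integral_congr hsubst, integral_const_mul,
          integral_comp_mul_deriv (fun q _ ↦ hderiv q) (by fun_prop) (by fun_prop)]
        simp
    _ = 2 * π + 4 := by rw [integral_sqrt_two_sub_sq]; ring
end

section
/- Define a(z) = (1/(4π²)) ∫_{T²} sin²(p₁) / (E₀(p) − z) dp for z < 0, where E₀(p) = 2(1 − cos p₁) + 2(1 − cos p₂) and T² = [−π, π)². Then lim_{z → 0⁻} a(z) = (π − 2)/(2π). -/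
open Real MeasureTheory Filter

/-- The two-dimensional torus realized as the square `[-π, π) × [-π, π)`. -/
def torus2 : Set (ℝ × ℝ) := Set.Ico (-π) π ×ˢ Set.Ico (-π) π

/-- The dispersion relation at zero quasimomentum. -/
noncomputable def E0 (p : ℝ × ℝ) : ℝ :=
  2 * (1 - Real.cos p.1) + 2 * (1 - Real.cos p.2)

/-!
Since `sin² p₁ ≤ E₀(p) ≤ E₀(p) - z` for `z ≤ 0`, the integrands are bounded by `1`, and they
converge pointwise everywhere (where `E₀` vanishes so does `sin p₁`); dominated convergence
reduces the limit to `∫ sin² p₁ / E₀`. By Fubini, the inner integral is the classical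
`∫_{-π}^{π} dy / (a - b cos y) = 2π / √(a² - b²)` with `a = 4 - 2 cos x`, `b = 2`. The outer
integrand is `2π`-periodic, and on `[0, 2π]` it equals `2π u² sin (x / 2) / √(2 - u²)` with
`u = cos (x / 2)`, whose antiderivative is `2π (u √(2 - u²) - 2 arcsin (u / √2))`; this gives
`2π² - 4π`.
-/

open Topology

theorem sub_mul_cos_pos {a b : ℝ} (hab : |b| < a) (y : ℝ) : 0 < a - b * cos y := by
  have := abs_le.1 ((abs_mul b (cos y)).trans_le
    (mul_le_of_le_one_right (abs_nonneg b) (abs_cos_le_one y)))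
  linarith

/-- Unlike the textbook `arctan (c * tan (y / 2))`, this antiderivative is smooth on `ℝ`. -/
theorem hasDerivAt_antideriv_inv_sub_mul_cos {a b : ℝ} (hab : |b| < a) (y : ℝ) :
    HasDerivAt
      (fun y => (y + 2 * arctan (b * sin y / (a + √(a ^ 2 - b ^ 2) - b * cos y))) /
        √(a ^ 2 - b ^ 2))
      (a - b * cos y)⁻¹ y := by
  set s := √(a ^ 2 - b ^ 2)
  have hb := abs_lt.1 hab
  have hs2 : s ^ 2 = a ^ 2 - b ^ 2 := sq_sqrt (by nlinarith)
  have hs : 0 < s := sqrt_pos.2 (by nlinarith)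
  have hE := sub_mul_cos_pos hab y
  have hD : 0 < a + s - b * cos y := by linarith
  have has : 0 < a + s := by linarith
  have hq := ((hasDerivAt_sin y).const_mul b).div
    (((hasDerivAt_cos y).const_mul b).const_sub (a + s)) hD.ne'
  refine (((hasDerivAt_id y).add (hq.arctan.const_mul 2)).div_const s).congr_deriv ?_
  have hpy := sin_sq_add_cos_sq y
  have hD2 : (a + s - b * cos y) ^ 2 + (b * sin y) ^ 2 = 2 * (a + s) * (a - b * cos y) := by
    linear_combination b ^ 2 * hpy + hs2
  have harctan : (1 + (b * sin y / (a + s - b * cos y)) ^ 2)⁻¹ *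
      ((b * cos y * (a + s - b * cos y) - b * sin y * -(b * -sin y)) / (a + s - b * cos y) ^ 2) =
      (b * cos y * (a + s) - b ^ 2) / (2 * (a + s) * (a - b * cos y)) := by
    rw [← hD2]
    field_simp
    linear_combination (-b ^ 2) * hpy
  simp only [Pi.div_apply, one_div]
  rw [harctan]
  field_simp
  linear_combination -hs2

theorem integral_inv_sub_mul_cos {a b : ℝ} (hab : |b| < a) :
    ∫ y in -π..π, (a - b * cos y)⁻¹ = 2 * π / √(a ^ 2 - b ^ 2) := by
  have hcont : Continuous fun y => (a - b * cos y)⁻¹ :=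
    (by fun_prop : Continuous fun y => a - b * cos y).inv₀ fun y => (sub_mul_cos_pos hab y).ne'
  rw [intervalIntegral.integral_eq_sub_of_hasDerivAt
    (fun y _ => hasDerivAt_antideriv_inv_sub_mul_cos hab y) (hcont.intervalIntegrable _ _)]
  simp only [sin_pi, sin_neg, mul_zero, neg_zero, zero_div, arctan_zero, add_zero]
  ring

theorem hasDerivAt_mul_sqrt_sub_arcsin {a u : ℝ} (hu : u ^ 2 < a) :
    HasDerivAt (fun u => u * √(a - u ^ 2) - a * arcsin (u / √a))
      (-2 * u ^ 2 / √(a - u ^ 2)) u := by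
  have ha : 0 < a := (sq_nonneg u).trans_lt hu
  have hsa : 0 < √a := sqrt_pos.2 ha
  have hw : 0 < √(a - u ^ 2) := sqrt_pos.2 (by linarith)
  have hv : |u / √a| < 1 := by
    rw [← sq_lt_one_iff_abs_lt_one, div_pow, sq_sqrt ha.le, div_lt_one ha]
    exact hu
  obtain ⟨hv₁, hv₂⟩ := abs_lt.1 hv
  have hsq := (hasDerivAt_id' u).mul (((hasDerivAt_pow 2 u).const_sub a).sqrt (by linarith))
  have harcsin := (hasDerivAt_arcsin hv₁.ne' hv₂.ne).comp u ((hasDerivAt_id' u).div_const √a)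
  have hroot : √(1 - (u / √a) ^ 2) = √(a - u ^ 2) / √a := by
    rw [← sqrt_div' _ ha.le, sub_div, div_self ha.ne', div_pow, sq_sqrt ha.le]
  refine (hsq.sub (harcsin.const_mul a)).congr_deriv ?_
  rw [hroot]
  field_simp
  rw [sq_sqrt (by linarith)]
  push_cast
  ring

noncomputable def sinSqSlice (x : ℝ) : ℝ :=
  2 * π * sin x ^ 2 / √((4 - 2 * cos x) ^ 2 - 2 ^ 2)

theorem integral_sin_sq_div_E0_slice (x : ℝ) :
    ∫ y in -π..π, sin x ^ 2 / E0 (x, y) = sinSqSlice x := by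
  by_cases hx : sin x = 0
  · simp [sinSqSlice, hx]
  have hcos : cos x < 1 := by
    refine (cos_le_one x).lt_of_ne fun h => hx ?_
    nlinarith [sin_sq_add_cos_sq x]
  have hE : ∀ y, sin x ^ 2 / E0 (x, y) = sin x ^ 2 * ((4 - 2 * cos x) - 2 * cos y)⁻¹ :=
    fun y => by rw [E0, div_eq_mul_inv]; ring_nf
  simp only [hE, intervalIntegral.integral_const_mul, sinSqSlice]
  rw [integral_inv_sub_mul_cos (by rw [abs_two]; linarith)]
  ring

theorem periodic_sinSqSlice : Function.Periodic sinSqSlice (2 * π) := fun x => by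
  simp only [sinSqSlice, sin_add_two_pi, cos_add_two_pi]

theorem sinSqSlice_eq_half_angle (x : ℝ) :
    sinSqSlice x = 2 * π * cos (x / 2) ^ 2 * |sin (x / 2)| / √(2 - cos (x / 2) ^ 2) := by
  have hsin : sin x = 2 * sin (x / 2) * cos (x / 2) := by
    rw [← sin_two_mul]; ring_nf
  have hcos : cos x = 2 * cos (x / 2) ^ 2 - 1 := by
    rw [← cos_two_mul]; ring_nf
  have hw : 0 < 2 - cos (x / 2) ^ 2 := by nlinarith [cos_sq_le_one (x / 2)]
  have hpy := sin_sq_add_cos_sq (x / 2)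
  have hsqrt : √((4 - 2 * cos x) ^ 2 - 2 ^ 2) = 4 * |sin (x / 2)| * √(2 - cos (x / 2) ^ 2) := by
    rw [← sqrt_sq (by positivity : 0 ≤ 4 * |sin (x / 2)| * √(2 - cos (x / 2) ^ 2))]
    congr 1
    rw [mul_pow, mul_pow, sq_abs, sq_sqrt hw.le, hcos]
    linear_combination (-16 * (2 - cos (x / 2) ^ 2)) * hpy
  rw [sinSqSlice, hsqrt, hsin]
  rcases eq_or_ne (sin (x / 2)) 0 with h | h
  · simp [h]
  · have := abs_pos.2 h
    field_simp
    rw [sq_abs]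
    ring

theorem continuous_sinSqSlice : Continuous sinSqSlice := by
  rw [funext sinSqSlice_eq_half_angle]
  exact Continuous.div (by fun_prop) (by fun_prop)
    fun x => (sqrt_pos.2 (by nlinarith [cos_sq_le_one (x / 2)])).ne'

theorem arcsin_inv_sqrt_two : arcsin (√2)⁻¹ = π / 4 := by
  rw [show (√2)⁻¹ = √2 / 2 by field_simp; simp, ← sin_pi_div_four,
    arcsin_sin (by linarith [pi_pos]) (by linarith [pi_pos])]

theorem integral_sinSqSlice : ∫ x in 0..2 * π, sinSqSlice x = 2 * π ^ 2 - 4 * π := by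
  have hderiv : ∀ x ∈ Set.uIcc 0 (2 * π), HasDerivAt
      (fun x => 2 * π * (cos (x / 2) * √(2 - cos (x / 2) ^ 2) - 2 * arcsin (cos (x / 2) / √2)))
      (sinSqSlice x) x := by
    intro x hx
    rw [Set.uIcc_of_le (by positivity)] at hx
    have hsin : 0 ≤ sin (x / 2) :=
      sin_nonneg_of_nonneg_of_le_pi (by linarith [hx.1]) (by linarith [hx.2])
    have hu : cos (x / 2) ^ 2 < 2 := by nlinarith [cos_sq_le_one (x / 2)]
    have hcos := (hasDerivAt_cos (x / 2)).comp x ((hasDerivAt_id' x).div_const 2)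
    refine (((hasDerivAt_mul_sqrt_sub_arcsin hu).comp x hcos).const_mul (2 * π)).congr_deriv ?_
    rw [sinSqSlice_eq_half_angle, abs_of_nonneg hsin]
    ring
  rw [intervalIntegral.integral_eq_sub_of_hasDerivAt hderiv
    (continuous_sinSqSlice.intervalIntegrable _ _)]
  rw [mul_div_cancel_left₀ π two_ne_zero, zero_div, cos_pi, cos_zero, neg_div, arcsin_neg,
    one_div, arcsin_inv_sqrt_two]
  norm_num
  ring

theorem sin_sq_le_E0 (p : ℝ × ℝ) : sin p.1 ^ 2 ≤ E0 p := by
  rw [E0]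
  nlinarith [sin_sq_add_cos_sq p.1, cos_le_one p.1, neg_one_le_cos p.1, cos_le_one p.2]

@[fun_prop]
theorem measurable_E0 : Measurable E0 := by
  unfold E0
  fun_prop

theorem norm_sin_sq_div_E0_sub_le_one {z : ℝ} (hz : z ≤ 0) (p : ℝ × ℝ) :
    ‖sin p.1 ^ 2 / (E0 p - z)‖ ≤ 1 := by
  have h := sin_sq_le_E0 p
  have hden : 0 ≤ E0 p - z := by linarith [sq_nonneg (sin p.1)]
  rw [norm_of_nonneg (div_nonneg (sq_nonneg _) hden)]
  exact div_le_one_of_le₀ (by linarith) hden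

theorem tendsto_integral_sin_sq_div_E0_sub (μ : Measure (ℝ × ℝ)) [IsFiniteMeasure μ] :
    Tendsto (fun z => ∫ p, sin p.1 ^ 2 / (E0 p - z) ∂μ) (𝓝[<] 0)
      (𝓝 (∫ p, sin p.1 ^ 2 / E0 p ∂μ)) := by
  refine tendsto_integral_filter_of_dominated_convergence (fun _ => 1)
    (Eventually.of_forall fun z => (by fun_prop : Measurable _).aestronglyMeasurable) ?_
    (integrable_const 1) (ae_of_all _ fun p => ?_)
  · filter_upwards [self_mem_nhdsWithin] with z hz
    exact ae_of_all _ (norm_sin_sq_div_E0_sub_le_one (le_of_lt hz))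
  by_cases hE : E0 p = 0
  · have hsin : sin p.1 ^ 2 = 0 := le_antisymm (hE ▸ sin_sq_le_E0 p) (sq_nonneg _)
    simp [hsin]
  · have hcont : ContinuousAt (fun z => sin p.1 ^ 2 / (E0 p - z)) 0 :=
      continuousAt_const.div (continuousAt_const.sub continuousAt_id) (by simpa using hE)
    simpa using hcont.tendsto.mono_left nhdsWithin_le_nhds

theorem volume_torus2_ne_top : volume torus2 ≠ ⊤ := by
  rw [torus2, Measure.volume_eq_prod, Measure.prod_prod, Real.volume_Ico]
  exact ENNReal.mul_ne_top ENNReal.ofReal_ne_top ENNReal.ofReal_ne_top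

theorem integral_torus2_sin_sq_div_E0 :
    ∫ p in torus2, sin p.1 ^ 2 / E0 p = 2 * π ^ 2 - 4 * π := by
  have hint : IntegrableOn (fun p => sin p.1 ^ 2 / E0 p) torus2 :=
    Measure.integrableOn_of_bounded volume_torus2_ne_top
      (by fun_prop : Measurable _).aestronglyMeasurable
      (ae_of_all _ fun p => by simpa using norm_sin_sq_div_E0_sub_le_one le_rfl p)
  calc ∫ p in torus2, sin p.1 ^ 2 / E0 p
      = ∫ x in Set.Ico (-π) π, ∫ y in Set.Ico (-π) π, sin x ^ 2 / E0 (x, y) :=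
        setIntegral_prod _ hint
    _ = ∫ x in -π..π, sinSqSlice x := by
        simp only [integral_Ico_eq_integral_Ioc, ← intervalIntegral.integral_of_le
          (by linarith [pi_pos] : -π ≤ π), integral_sin_sq_div_E0_slice]
    _ = ∫ x in 0..2 * π, sinSqSlice x := by
        simpa [two_mul] using periodic_sinSqSlice.intervalIntegral_add_eq (-π) 0
    _ = 2 * π ^ 2 - 4 * π := integral_sinSqSlice

theorem tendsto_a_at_zero_from_below :
    Tendsto
      (fun z : ℝ =>
        (1 / (4 * π ^ 2)) *
          ∫ p in torus2, (Real.sin p.1) ^ 2 / (E0 p - z))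
      (nhdsWithin 0 (Set.Iio 0)) (nhds ((π - 2) / (2 * π))) := by
  have : IsFiniteMeasure (volume.restrict torus2) :=
    isFiniteMeasure_restrict.2 volume_torus2_ne_top
  have h := (tendsto_integral_sin_sq_div_E0_sub (volume.restrict torus2)).const_mul
    (1 / (4 * π ^ 2))
  rw [integral_torus2_sin_sq_div_E0] at h
  convert h using 2
  field_simp
  ring
end

section
/- Let μ₀⁻ = π(88 − 30π − √(1044π² − 6720π + 10816))/(240π − 24π² − 512), μ₀⁺ = π(88 − 30π + √(1044π² − 6720π + 10816))/(240π − 24π² − 512), μ₁⁻ = (128 − 16π − 9π² − √(225π⁴ − 1440π³ + 3904π² − 10240π + 16384))/(120π − 12π² − 256), μ₁⁺ = (128 − 16π − 9π² + √(225π⁴ − 1440π³ + 3904π² − 10240π + 16384))/(120π − 12π² − 256). Then μ₁⁻ < μ₀⁻ < μ₁⁺ < μ₀⁺ < 0. -/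
/-!
The denominators are `2D` and `D` with `D = 120π - 12π² - 256 ≈ 2.555`, which is positive.
After clearing `D` the four inequalities compare the numerators `≈ -14.70, -14.36, -7.48, -5.27`,
and these gaps are wide enough to follow from `π ∈ (3.141592, 3.141593)` and two-decimal
enclosures of the two square roots.
-/

open Real

lemma mu_denominator_pos : 0 < 120 * π - 12 * π ^ 2 - 256 := by
  have hl := pi_gt_d6
  have hu := pi_lt_d6
  nlinarith

lemma sqrt_discriminant₀_mem :
    √(1044 * π ^ 2 - 6720 * π + 10816) ∈ Set.Ioo 2.89 2.9 := by
  have hl := pi_gt_d6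
  have hu := pi_lt_d6
  constructor
  · rw [lt_sqrt (by norm_num)]
    nlinarith
  · rw [sqrt_lt' (by norm_num)]
    nlinarith

lemma sqrt_discriminant₁_mem :
    √(225 * π ^ 4 - 1440 * π ^ 3 + 3904 * π ^ 2 - 10240 * π + 16384) ∈ Set.Ioo 3.61 3.62 := by
  have hl := pi_gt_d6
  have hu := pi_lt_d6
  have h2l : 9.869 < π ^ 2 := by nlinarith
  have h2u : π ^ 2 < 9.8697 := by nlinarith
  constructor
  · rw [lt_sqrt (by norm_num)]
    nlinarith
  · rw [sqrt_lt' (by norm_num)]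
    nlinarith

lemma mu_numerators_order {a b : ℝ} (ha : a ∈ Set.Ioo 2.89 2.9) (hb : b ∈ Set.Ioo 3.61 3.62) :
    128 - 16 * π - 9 * π ^ 2 - b < π * (88 - 30 * π - a) / 2 ∧
      π * (88 - 30 * π - a) / 2 < 128 - 16 * π - 9 * π ^ 2 + b ∧
      128 - 16 * π - 9 * π ^ 2 + b < π * (88 - 30 * π + a) / 2 ∧
      π * (88 - 30 * π + a) / 2 < 0 := by
  have hl := pi_gt_d6
  have hu := pi_lt_d6
  obtain ⟨hal, hau⟩ := ha
  obtain ⟨hbl, hbu⟩ := hb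
  refine ⟨?_, ?_, ?_, ?_⟩ <;> nlinarith

theorem mu_roots_order :
    let μ0m : ℝ := π * (88 - 30 * π - Real.sqrt (1044 * π ^ 2 - 6720 * π + 10816)) /
      (240 * π - 24 * π ^ 2 - 512)
    let μ0p : ℝ := π * (88 - 30 * π + Real.sqrt (1044 * π ^ 2 - 6720 * π + 10816)) /
      (240 * π - 24 * π ^ 2 - 512)
    let μ1m : ℝ := (128 - 16 * π - 9 * π ^ 2 -
        Real.sqrt (225 * π ^ 4 - 1440 * π ^ 3 + 3904 * π ^ 2 - 10240 * π + 16384)) /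
      (120 * π - 12 * π ^ 2 - 256)
    let μ1p : ℝ := (128 - 16 * π - 9 * π ^ 2 +
        Real.sqrt (225 * π ^ 4 - 1440 * π ^ 3 + 3904 * π ^ 2 - 10240 * π + 16384)) /
      (120 * π - 12 * π ^ 2 - 256)
    μ1m < μ0m ∧ μ0m < μ1p ∧ μ1p < μ0p ∧ μ0p < 0 := by
  intro μ0m μ0p μ1m μ1p
  have hD := mu_denominator_pos
  have clear_two (x : ℝ) :
      x / (240 * π - 24 * π ^ 2 - 512) = x / 2 / (120 * π - 12 * π ^ 2 - 256) := by
    rw [div_div]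
    ring_nf
  obtain ⟨h₁, h₂, h₃, h₄⟩ := mu_numerators_order sqrt_discriminant₀_mem sqrt_discriminant₁_mem
  simp only [μ0m, μ0p, μ1m, μ1p, clear_two, div_lt_div_iff_of_pos_right hD]
  exact ⟨h₁, h₂, h₃, div_neg_of_neg_of_pos h₄ hD⟩
end
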